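/- In U_q(sl3), F_2 \hat{F}_3[a] = \hat{F}_3[a+1] F_2. -/

import Mathlib

noncomputable section

/-- The defining relations of `U_q(sl3)` inside an `ℝ`-algebra `R`:
generators `E₁ E₂ F₁ F₂` and `K₁ K₂` with inverses `K₁' K₂'`. -/
structure UqSL3 (R : Type*) [Ring R] [Algebra ℝ R] (q : ℝ)
    (E₁ E₂ F₁ F₂ K₁ K₁' K₂ K₂' : R) : Prop where
  K₁mul : K₁ * K₁' = 1
  K₁mul' : K₁' * K₁ = 1
  K₂mul : K₂ * K₂' = 1
  K₂mul' : K₂' * K₂ = 1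
  Kcomm : K₁ * K₂ = K₂ * K₁
  Kcomm' : K₁ * K₂' = K₂' * K₁
  Kcomm'' : K₁' * K₂ = K₂ * K₁'
  KE11 : K₁ * E₁ = (q ^ (2:ℤ)) • (E₁ * K₁)
  KE12 : K₁ * E₂ = (q ^ (-1:ℤ)) • (E₂ * K₁)
  KE21 : K₂ * E₁ = (q ^ (-1:ℤ)) • (E₁ * K₂)
  KE22 : K₂ * E₂ = (q ^ (2:ℤ)) • (E₂ * K₂)
  KF11 : K₁ * F₁ = (q ^ (-2:ℤ)) • (F₁ * K₁)
  KF12 : K₁ * F₂ = (q ^ (1:ℤ)) • (F₂ * K₁)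
  KF21 : K₂ * F₁ = (q ^ (1:ℤ)) • (F₁ * K₂)
  KF22 : K₂ * F₂ = (q ^ (-2:ℤ)) • (F₂ * K₂)
  EF11 : E₁ * F₁ - F₁ * E₁ = (q - q⁻¹)⁻¹ • (K₁ - K₁')
  EF22 : E₂ * F₂ - F₂ * E₂ = (q - q⁻¹)⁻¹ • (K₂ - K₂')
  EF12 : E₁ * F₂ = F₂ * E₁
  EF21 : E₂ * F₁ = F₁ * E₂
  serreE₁ : E₁ ^ 2 * E₂ - (q + q⁻¹) • (E₁ * E₂ * E₁) + E₂ * E₁ ^ 2 = 0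
  serreE₂ : E₂ ^ 2 * E₁ - (q + q⁻¹) • (E₂ * E₁ * E₂) + E₁ * E₂ ^ 2 = 0
  serreF₁ : F₁ ^ 2 * F₂ - (q + q⁻¹) • (F₁ * F₂ * F₁) + F₂ * F₁ ^ 2 = 0
  serreF₂ : F₂ ^ 2 * F₁ - (q + q⁻¹) • (F₂ * F₁ * F₂) + F₁ * F₂ ^ 2 = 0

/-- `F̂₃[a] = F₁F₂ (q^{a+1}K₂ - q^{-a-1}K₂⁻¹)/(q-q⁻¹) - F₂F₁ (q^a K₂ - q^{-a}K₂⁻¹)/(q-q⁻¹)`. -/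
def hatF₃ {R : Type*} [Ring R] [Algebra ℝ R] (q a : ℝ) (F₁ F₂ K₂ K₂' : R) : R :=
  (q - q⁻¹)⁻¹ • (F₁ * F₂ * (q ^ (a + 1) • K₂ - q ^ (-(a + 1)) • K₂')
    - F₂ * F₁ * (q ^ a • K₂ - q ^ (-a) • K₂'))

/-!
Write `[K; b] = (q^b K - q^{-b} K⁻¹)/(q - q⁻¹)`, so that `F̂₃[a] = F₁F₂[K₂; a+1] - F₂F₁[K₂; a]`.
Moving `F₂` to the left through `[K₂; b]` lowers `b` by two, and
`[K; b+1] + [K; b-1] = (q + q⁻¹)[K; b]`. After these two rewrites the difference of the two sides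
of the identity is `(q + q⁻¹) F₂F₁F₂ - F₂²F₁ - F₁F₂²` times `[K₂; a]`, which vanishes by the
quantum Serre relation for `F₂`.
-/

open Real

section Bracket

variable {R : Type*} [Ring R] [Algebra ℝ R]

def qBracket (q b : ℝ) (K K' : R) : R :=
  (q - q⁻¹)⁻¹ • (q ^ b • K - q ^ (-b) • K')

theorem hatF₃_eq_qBracket (q a : ℝ) (F₁ F₂ K K' : R) :
    hatF₃ q a F₁ F₂ K K' = F₁ * F₂ * qBracket q (a + 1) K K' - F₂ * F₁ * qBracket q a K K' := by
  rw [hatF₃, qBracket, qBracket, mul_smul_comm, mul_smul_comm, smul_sub]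

theorem qBracket_add_one_add_qBracket_sub_one {q : ℝ} (hq : q ≠ 0) (b : ℝ) (K K' : R) :
    qBracket q (b + 1) K K' + qBracket q (b - 1) K K' = (q + q⁻¹) • qBracket q b K K' := by
  have hneg₁ : -(b + 1) = -b - 1 := by ring
  have hneg₂ : -(b - 1) = -b + 1 := by ring
  simp only [qBracket, hneg₁, hneg₂, rpow_add_one hq, rpow_sub_one hq, smul_smul, smul_sub]
  match_scalars <;> field_simp
  ring

theorem mul_eq_inv_smul_mul_of_mul_eq_smul_mul {K K' F : R} {c : ℝ} (hc : c ≠ 0)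
    (hKK' : K * K' = 1) (hK'K : K' * K = 1) (hKF : K * F = c • (F * K)) :
    K' * F = c⁻¹ • (F * K') := by
  calc K' * F = c⁻¹ • (c • (K' * F)) := (inv_smul_smul₀ hc _).symm
    _ = c⁻¹ • (K' * (K * F) * K') := by
        rw [hKF, mul_smul_comm, smul_mul_assoc]
        simp only [mul_assoc, hKK', mul_one]
    _ = c⁻¹ • (F * K') := by rw [← mul_assoc, hK'K, one_mul]

theorem qBracket_mul_eq_mul_qBracket_sub_two {q : ℝ} (hq : q ≠ 0) (b : ℝ) {K K' F : R}
    (hKF : K * F = q ^ (-2 : ℤ) • (F * K)) (hK'F : K' * F = q ^ (2 : ℤ) • (F * K')) :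
    qBracket q b K K' * F = F * qBracket q (b - 2) K K' := by
  have hpow₁ : q ^ (b - 2) = q ^ b * q ^ (-2 : ℤ) := by
    rw [← rpow_add_intCast hq]; push_cast; ring_nf
  have hpow₂ : q ^ (-(b - 2)) = q ^ (-b) * q ^ (2 : ℤ) := by
    rw [← rpow_add_intCast hq]; push_cast; ring_nf
  simp only [qBracket, smul_mul_assoc, sub_mul, hKF, hK'F, smul_smul, mul_smul_comm, mul_sub,
    hpow₁, hpow₂]

end Bracket

theorem stmt_general {R : Type*} [Ring R] [Algebra ℝ R] (q : ℝ) (hq0 : 0 < q)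
    (E₁ E₂ F₁ F₂ K₁ K₁' K₂ K₂' : R)
    (h : UqSL3 R q E₁ E₂ F₁ F₂ K₁ K₁' K₂ K₂') (a : ℝ) :
    F₂ * hatF₃ q a F₁ F₂ K₂ K₂' = hatF₃ q (a + 1) F₁ F₂ K₂ K₂' * F₂ := by
  have hq : q ≠ 0 := hq0.ne'
  have hK'F₂ : K₂' * F₂ = q ^ (2 : ℤ) • (F₂ * K₂') := by
    rw [mul_eq_inv_smul_mul_of_mul_eq_smul_mul (zpow_ne_zero _ hq) h.K₂mul h.K₂mul' h.KF22,
      ← zpow_neg, neg_neg]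
  have hmove (b : ℝ) := qBracket_mul_eq_mul_qBracket_sub_two hq b h.KF22 hK'F₂
  have hserre : F₂ ^ 2 * F₁ + F₁ * F₂ ^ 2 = (q + q⁻¹) • (F₂ * F₁ * F₂) := by
    rw [← sub_eq_zero, ← h.serreF₂]; abel
  set B : ℝ → R := fun b => qBracket q b K₂ K₂'
  rw [hatF₃_eq_qBracket, hatF₃_eq_qBracket, sub_mul, mul_assoc _ (B (a + 1 + 1)),
    mul_assoc _ (B (a + 1)), hmove, hmove, mul_sub, sub_eq_sub_iff_add_eq_add]
  calc F₂ * (F₁ * F₂ * B (a + 1)) + F₂ * F₁ * (F₂ * B (a + 1 - 2))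
      = F₂ * F₁ * F₂ * (B (a + 1) + B (a - 1)) := by
        rw [show a + 1 - 2 = a - 1 by ring]
        simp only [mul_add, mul_assoc]
    _ = (F₂ ^ 2 * F₁ + F₁ * F₂ ^ 2) * B a := by
        rw [qBracket_add_one_add_qBracket_sub_one hq, hserre, mul_smul_comm, smul_mul_assoc]
    _ = F₁ * F₂ * (F₂ * B (a + 1 + 1 - 2)) + F₂ * (F₂ * F₁ * B a) := by
        rw [show a + 1 + 1 - 2 = a by ring, add_comm]
        simp only [sq, add_mul, mul_assoc]

theorem stmt {R : Type*} [Ring R] [Algebra ℝ R] (q : ℝ) (hq0 : 0 < q) (hq1 : q < 1)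
    (E₁ E₂ F₁ F₂ K₁ K₁' K₂ K₂' : R)
    (h : UqSL3 R q E₁ E₂ F₁ F₂ K₁ K₁' K₂ K₂') (a : ℝ) :
    F₂ * hatF₃ q a F₁ F₂ K₂ K₂' = hatF₃ q (a + 1) F₁ F₂ K₂ K₂' * F₂ :=
  stmt_general q hq0 E₁ E₂ F₁ F₂ K₁ K₁' K₂ K₂' h a
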